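/- arXiv:1702.03647 — 8 statements merged into one kernel-verified Lean document; each statement's English description precedes it below -/
import Mathlib

section
/- For an ordered alphabet Σ = {a₁ < a₂ < ⋯ < a_k} and a word w over Σ, the Parikh matrix Ψ_Σ(w) = (m_{i,j}) is upper triangular with unit diagonal, and for all 1 ≤ i ≤ j ≤ k, the entry m_{i,j+1} equals the number of occurrences of the word a_i a_{i+1} ⋯ a_j as a scattered subword of w. -/
/-- The number of occurrences of `v` as a scattered subword (subsequence) of `w`. -/
def lcountF {k : ℕ} (v w : List (Fin k)) : ℕ := w.sublists.count v

/-- The Parikh matrix mapping for the ordered alphabet `a₁ < ⋯ < a_k` (letters `Fin k`):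
the monoid morphism sending the letter `q` to the identity matrix plus a single `1`
in entry `(q, q+1)`. -/
def parikhMat (k : ℕ) (w : List (Fin k)) : Matrix (Fin (k+1)) (Fin (k+1)) ℕ :=
  (w.map (fun q => (1 : Matrix (Fin (k+1)) (Fin (k+1)) ℕ) +
    Matrix.single q.castSucc q.succ 1)).prod

/-- The word `a_i a_{i+1} ⋯ a_j`. -/
def intervalWord (k : ℕ) (i j : Fin k) : List (Fin k) :=
  (List.finRange k).filter (fun x => i ≤ x ∧ x ≤ j)

/-!
Left multiplication by `Ψ(a)` adds row `a + 1` to row `a`, so the entries of the Parikh matrix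
satisfy `Ψ(a w)ᵢⱼ = Ψ(w)ᵢⱼ + [i = a] Ψ(w)_{a+1,j}`. The number of occurrences of
`aᵢ ⋯ a_{j-1}` in `a w` obeys the same recursion, since an occurrence either avoids the first
letter of `a w` or starts there; both sides agree on the empty word, where `Ψ` is the identity.
-/

namespace List

variable {α : Type*} [DecidableEq α]

theorem count_nil_sublists (w : List α) : w.sublists.count [] = 1 := by
  rw [(sublists_perm_sublists' w).count_eq]
  induction w with
  | nil => rfl
  | cons a w ih => simp [sublists'_cons, count_append, ih, count_eq_zero]

theorem count_cons_sublists_cons (b : α) (v : List α) (a : α) (w : List α) :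
    (a :: w).sublists.count (b :: v) =
      w.sublists.count (b :: v) + if b = a then w.sublists.count v else 0 := by
  simp only [(sublists_perm_sublists' _).count_eq, sublists'_cons, count_append]
  congr 1
  split_ifs with h
  · subst h
    exact count_map_of_injective _ _ cons_injective v
  · exact count_eq_zero.2 (by simp [Ne.symm h])

end List

def segmentWord (k : ℕ) (i j : Fin (k + 1)) : List (Fin k) :=
  (List.finRange k).filter (fun x => i ≤ x.castSucc ∧ x.castSucc < j)

section

variable {k : ℕ}

theorem lcountF_nil_left (w : List (Fin k)) : lcountF [] w = 1 :=
  w.count_nil_sublists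

theorem lcountF_cons_nil (b : Fin k) (v : List (Fin k)) : lcountF (b :: v) [] = 0 := by
  simp [lcountF]

theorem lcountF_cons_cons (b : Fin k) (v : List (Fin k)) (a : Fin k) (w : List (Fin k)) :
    lcountF (b :: v) (a :: w) = lcountF (b :: v) w + if b = a then lcountF v w else 0 :=
  List.count_cons_sublists_cons b v a w

theorem segmentWord_self (i : Fin (k + 1)) : segmentWord k i i = [] :=
  List.filter_eq_nil_iff.2 fun _ _ h => by
    rw [decide_eq_true_eq] at h
    exact h.1.not_gt h.2

theorem segmentWord_castSucc (b : Fin k) (j : Fin (k + 1)) (h : b.castSucc < j) :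
    segmentWord k b.castSucc j = b :: segmentWord k b.succ j := by
  have hsorted (i j : Fin (k + 1)) : (segmentWord k i j).Pairwise (· < ·) :=
    (List.pairwise_lt_finRange k).filter _
  refine (hsorted _ _).eq_of_mem_iff ((hsorted _ _).cons fun x hx => ?_) fun x => ?_
  · simp only [segmentWord, List.mem_filter, decide_eq_true_eq] at hx
    exact Fin.castSucc_lt_castSucc_iff.1 (Fin.castSucc_lt_succ.trans_le hx.2.1)
  · simp only [segmentWord, List.mem_filter, List.mem_cons, List.mem_finRange, true_and,
      decide_eq_true_eq, Fin.le_def, Fin.lt_def, Fin.ext_iff, Fin.val_castSucc,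
      Fin.val_succ] at h ⊢
    omega

theorem intervalWord_eq_segmentWord (i j : Fin k) :
    intervalWord k i j = segmentWord k i.castSucc j.succ := by
  simp [intervalWord, segmentWord]

theorem parikhMat_nil : parikhMat k [] = 1 := rfl

theorem parikhMat_cons (a : Fin k) (w : List (Fin k)) :
    parikhMat k (a :: w) = (1 + Matrix.single a.castSucc a.succ 1) * parikhMat k w := by
  rw [parikhMat, List.map_cons, List.prod_cons, parikhMat]

theorem parikhMat_cons_apply (a : Fin k) (w : List (Fin k)) (i j : Fin (k + 1)) :
    parikhMat k (a :: w) i j =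
      parikhMat k w i j + if i = a.castSucc then parikhMat k w a.succ j else 0 := by
  rw [parikhMat_cons, add_mul, one_mul, Matrix.add_apply]
  split_ifs with h
  · rw [h, Matrix.single_mul_apply_same, one_mul]
  · rw [Matrix.single_mul_apply_of_ne _ _ _ _ _ h, add_zero]

theorem isUpperTriangular_parikhMat (w : List (Fin k)) : (parikhMat k w).IsUpperTriangular := by
  refine List.prod_induction _ (fun _ _ => .mul) Matrix.blockTriangular_one ?_
  simp only [List.mem_map]
  rintro _ ⟨q, -, rfl⟩
  exact Matrix.blockTriangular_one.add (Matrix.blockTriangular_single Fin.castSucc_lt_succ.le _)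

theorem parikhMat_apply_of_le (w : List (Fin k)) {i j : Fin (k + 1)} (hij : i ≤ j) :
    parikhMat k w i j = lcountF (segmentWord k i j) w := by
  induction w generalizing i j with
  | nil =>
    rcases hij.eq_or_lt with rfl | hlt
    · rw [parikhMat_nil, Matrix.one_apply_eq, segmentWord_self, lcountF_nil_left]
    · obtain ⟨b, rfl⟩ := Fin.exists_castSucc_eq.2 (Fin.ne_last_of_lt hlt)
      rw [parikhMat_nil, Matrix.one_apply_ne hlt.ne, segmentWord_castSucc b j hlt,
        lcountF_cons_nil]
  | cons a w ih =>
    rw [parikhMat_cons_apply, ih hij]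
    rcases hij.eq_or_lt with rfl | hlt
    · rw [segmentWord_self, lcountF_nil_left, lcountF_nil_left, add_eq_left]
      split_ifs with h
      · rw [h]
        exact isUpperTriangular_parikhMat w Fin.castSucc_lt_succ
      · rfl
    · obtain ⟨b, rfl⟩ := Fin.exists_castSucc_eq.2 (Fin.ne_last_of_lt hlt)
      rw [segmentWord_castSucc b j hlt, lcountF_cons_cons]
      simp only [Fin.castSucc_inj]
      split_ifs with h
      · subst h
        rw [ih (Fin.castSucc_lt_iff_succ_le.1 hlt)]
      · rfl

end

theorem parikh_matrix_properties (k : ℕ) (w : List (Fin k)) :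
    (∀ i j : Fin (k+1), j < i → parikhMat k w i j = 0) ∧
    (∀ i : Fin (k+1), parikhMat k w i i = 1) ∧
    (∀ i j : Fin k, i ≤ j →
      parikhMat k w i.castSucc j.succ = lcountF (intervalWord k i j) w) := by
  refine ⟨fun i j hji => isUpperTriangular_parikhMat w hji, fun i => ?_, fun i j hij => ?_⟩
  · rw [parikhMat_apply_of_le w le_rfl, segmentWord_self, lcountF_nil_left]
  · rw [parikhMat_apply_of_le w (Fin.castSucc_lt_succ_iff.2 hij).le, intervalWord_eq_segmentWord]
end

section
/- Let Σ = {a, b, c}. Two words w, w' over Σ are strongly M-equivalent if and only if w ≡_M w' with respect to each of the three ordered alphabets {a < b < c}, {b < a < c}, and {a < c < b}. -/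
/-- The number of occurrences of `v` as a scattered subword (subsequence) of `w`. -/
def lcount (v w : List (Fin 3)) : ℕ := w.sublists.count v

/-- The letters of the ternary alphabet `Σ = {a, b, c}`. -/
def A : Fin 3 := 0
def B : Fin 3 := 1
def C : Fin 3 := 2

/-- `w` and `w'` are M-equivalent with respect to the ordered alphabet `{x < y < z}`:
they have the same Parikh matrix, equivalently the same scattered-subword counts for
`x, y, z, xy, yz, xyz`. -/
def Mequiv (x y z : Fin 3) (w w' : List (Fin 3)) : Prop :=
  lcount [x] w = lcount [x] w' ∧ lcount [y] w = lcount [y] w' ∧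
  lcount [z] w = lcount [z] w' ∧ lcount [x, y] w = lcount [x, y] w' ∧
  lcount [y, z] w = lcount [y, z] w' ∧ lcount [x, y, z] w = lcount [x, y, z] w'

/-- Strong M-equivalence: M-equivalence with respect to every ordering of `{a, b, c}`. -/
def StrongME (w w' : List (Fin 3)) : Prop :=
  ∀ x y z : Fin 3, [x, y, z].Perm [A, B, C] → Mequiv x y z w w'

/-- `t`-fold repetition of the word `l`. -/
def lpow (l : List (Fin 3)) (n : ℕ) : List (Fin 3) := (List.replicate n l).flatten


/-! Counting scattered subwords satisfies the shuffle identities `|w|_x |w|_y = |w|_xy + |w|_yx`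
and `|w|_xy |w|_z = |w|_xyz + |w|_xzy + |w|_zxy` (for `z` distinct from `x` and `y`). The three
orders give the counts of all letters, of `ab, ba, bc, ac, cb` and of `abc, bac, acb`; the first
identity then yields `ca`, and the second yields in turn `bca` (from `bc · a`), `cab` (from
`ab · c`) and `cba` (from `cb · a`). These are all the counts the remaining three orders need. -/

section ShuffleIdentities

variable {α : Type*} [DecidableEq α]

theorem count_sublists_eq_count_sublists' (v w : List α) :
    w.sublists.count v = w.sublists'.count v :=
  w.sublists_perm_sublists'.count_eq v

theorem count_nil_sublists (w : List α) : w.sublists.count [] = 1 := by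
  rw [count_sublists_eq_count_sublists']
  induction w with
  | nil => rfl
  | cons a w ih => simp [List.sublists'_cons, ih, List.count_eq_zero]

theorem count_cons_sublists_cons (a b : α) (t w : List α) :
    (a :: w).sublists.count (b :: t) =
      w.sublists.count (b :: t) + if b = a then w.sublists.count t else 0 := by
  simp only [count_sublists_eq_count_sublists', List.sublists'_cons, List.count_append]
  congr 1
  split_ifs with hba
  · subst hba
    exact List.count_map_of_injective _ _ List.cons_injective t
  · simp [List.count_eq_zero, Ne.symm hba]

theorem count_singleton_sublists_mul {x y : α} (hxy : x ≠ y) (w : List α) :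
    w.sublists.count [x] * w.sublists.count [y] =
      w.sublists.count [x, y] + w.sublists.count [y, x] := by
  induction w with
  | nil => simp
  | cons a w ih =>
    simp only [count_cons_sublists_cons, count_nil_sublists]
    split_ifs <;> subst_vars <;> first | contradiction | linarith

theorem count_pair_sublists_mul_singleton {x y z : α} (hzx : z ≠ x) (hzy : z ≠ y)
    (w : List α) :
    w.sublists.count [x, y] * w.sublists.count [z] =
      w.sublists.count [x, y, z] + w.sublists.count [x, z, y] +
        w.sublists.count [z, x, y] := by
  induction w with
  | nil => simp
  | cons a w ih =>
    simp only [count_cons_sublists_cons, count_nil_sublists]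
    split_ifs <;> subst_vars <;>
      first | contradiction | linarith [count_singleton_sublists_mul hzy w]

end ShuffleIdentities

section ShuffleCongr

variable {w w' : List (Fin 3)}

theorem lcount_shuffle_singletons_congr {x y : Fin 3} (hxy : x ≠ y)
    (hx : lcount [x] w = lcount [x] w') (hy : lcount [y] w = lcount [y] w') :
    lcount [x, y] w + lcount [y, x] w = lcount [x, y] w' + lcount [y, x] w' :=
  calc _ = lcount [x] w * lcount [y] w := (count_singleton_sublists_mul hxy w).symm
    _ = lcount [x] w' * lcount [y] w' := by rw [hx, hy]
    _ = _ := count_singleton_sublists_mul hxy w'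

theorem lcount_shuffle_pair_singleton_congr {x y z : Fin 3} (hzx : z ≠ x) (hzy : z ≠ y)
    (hxy : lcount [x, y] w = lcount [x, y] w') (hz : lcount [z] w = lcount [z] w') :
    lcount [x, y, z] w + lcount [x, z, y] w + lcount [z, x, y] w =
      lcount [x, y, z] w' + lcount [x, z, y] w' + lcount [z, x, y] w' :=
  calc _ = lcount [x, y] w * lcount [z] w :=
        (count_pair_sublists_mul_singleton hzx hzy w).symm
    _ = lcount [x, y] w' * lcount [z] w' := by rw [hxy, hz]
    _ = _ := count_pair_sublists_mul_singleton hzx hzy w'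

end ShuffleCongr

theorem strongME_iff_three_orders (w w' : List (Fin 3)) :
    StrongME w w' ↔
      Mequiv A B C w w' ∧ Mequiv B A C w w' ∧ Mequiv A C B w w' := by
  refine ⟨fun h => ⟨h A B C (by decide), h B A C (by decide), h A C B (by decide)⟩, ?_⟩
  rintro ⟨⟨eA, eB, eC, eAB, eBC, eABC⟩, ⟨-, -, -, eBA, eAC, eBAC⟩, ⟨-, -, -, -, eCB, eACB⟩⟩
  have eCA : lcount [C, A] w = lcount [C, A] w' := by
    have := lcount_shuffle_singletons_congr (by decide) eA eC
    omega
  have eBCA : lcount [B, C, A] w = lcount [B, C, A] w' := by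
    have := lcount_shuffle_pair_singleton_congr (by decide) (by decide) eBC eA
    omega
  have eCAB : lcount [C, A, B] w = lcount [C, A, B] w' := by
    have := lcount_shuffle_pair_singleton_congr (by decide) (by decide) eAB eC
    omega
  have eCBA : lcount [C, B, A] w = lcount [C, B, A] w' := by
    have := lcount_shuffle_pair_singleton_congr (by decide) (by decide) eCB eA
    omega
  intro x y z hp
  fin_cases x <;> fin_cases y <;> fin_cases z <;> first | exact absurd hp (by decide) | skip
  · exact ⟨eA, eB, eC, eAB, eBC, eABC⟩
  · exact ⟨eA, eC, eB, eAC, eCB, eACB⟩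
  · exact ⟨eB, eA, eC, eBA, eAC, eBAC⟩
  · exact ⟨eB, eC, eA, eBC, eCA, eBCA⟩
  · exact ⟨eC, eA, eB, eCA, eAB, eCAB⟩
  · exact ⟨eC, eB, eA, eCB, eBA, eCBA⟩
end

section
/- Let Σ = {a, b, c} and suppose w = x·ab·y·ba·z and w' = x·ba·y·ab·z for some words x, z over Σ and y over {a, b}. Then w and w' are strongly M-equivalent (Rule SE). -/
def cnt : List (Fin 3) → List (Fin 3) → ℕ
  | v, [] => if v = [] then 1 else 0
  | v, a :: w => cnt v w + match v with
      | [] => 0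
      | b :: v' => if b = a then cnt v' w else 0

lemma lcount_eq_cnt (v w : List (Fin 3)) : lcount v w = cnt v w := by
  induction w generalizing v with
  | nil => cases v <;> simp [lcount, cnt, List.count_cons]
  | cons a w ih =>
    have hp := List.sublists_cons_perm_append a w
    rw [lcount, List.count_eq_countP, hp.countP_eq, List.countP_append, List.countP_map]
    simp only [Function.comp_def]
    have h1 : List.countP (· == v) w.sublists = cnt v w := by
      rw [← List.count_eq_countP, ← lcount]; exact ih v
    cases v with
    | nil =>
      have h2 : List.countP (fun s => a :: s == ([] : List (Fin 3))) w.sublists = 0 := by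
        rw [List.countP_eq_zero]; intro l _; simp
      rw [cnt, h1, h2]
    | cons b v' =>
      rw [cnt]
      by_cases hba : b = a
      · subst hba
        have h2 : List.countP (fun s => b :: s == b :: v') w.sublists = cnt v' w := by
          have he : (fun s : List (Fin 3) => b :: s == b :: v') = (fun s => s == v') := by
            funext s; simp
          rw [he, ← List.count_eq_countP, ← lcount]; exact ih v'
        rw [h1, h2]; simp
      · have h2 : List.countP (fun s => a :: s == b :: v') w.sublists = 0 := by
          rw [List.countP_eq_zero]; intro l _
          simp only [beq_iff_eq, List.cons.injEq, not_and]
          intro h; exact absurd h.symm hba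
        rw [h1, h2]; simp [hba]

lemma cnt_nil (w : List (Fin 3)) : cnt [] w = 1 := by
  induction w <;> simp [cnt, *]

lemma cnt1 (p : Fin 3) (u w : List (Fin 3)) :
    cnt [p] (u ++ w) = cnt [p] u + cnt [p] w := by
  induction u with
  | nil => simp [cnt]
  | cons a u ih =>
    simp only [List.cons_append, cnt, List.append_eq, ih, cnt_nil]
    split <;> omega

lemma cnt2 (p q : Fin 3) (u w : List (Fin 3)) :
    cnt [p, q] (u ++ w) = cnt [p, q] u + cnt [p] u * cnt [q] w + cnt [p, q] w := by
  induction u with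
  | nil => simp [cnt]
  | cons a u ih =>
    simp only [List.cons_append, cnt, List.append_eq, ih, cnt1, cnt_nil]
    split <;> ring

lemma cnt3 (p q r : Fin 3) (u w : List (Fin 3)) :
    cnt [p, q, r] (u ++ w) = cnt [p, q, r] u + cnt [p, q] u * cnt [r] w
      + cnt [p] u * cnt [q, r] w + cnt [p, q, r] w := by
  induction u with
  | nil => simp [cnt]
  | cons a u ih =>
    simp only [List.cons_append, cnt, List.append_eq, ih, cnt1, cnt2, cnt_nil]
    split <;> ring

lemma perm_cases : ∀ p q r : Fin 3, [p, q, r].Perm [A, B, C] →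
    (p = A ∧ q = B ∧ r = C) ∨ (p = A ∧ q = C ∧ r = B) ∨ (p = B ∧ q = A ∧ r = C) ∨
    (p = B ∧ q = C ∧ r = A) ∨ (p = C ∧ q = A ∧ r = B) ∨ (p = C ∧ q = B ∧ r = A) := by
  decide

lemma cntCy {y : List (Fin 3)} (hy : ∀ l ∈ y, l = A ∨ l = B) : cnt [C] y = 0 := by
  induction y with
  | nil => simp [cnt]
  | cons a y ih =>
    have := hy a (by simp)
    have h2 : C ≠ a := by rcases this with h | h <;> subst h <;> decide
    simp [cnt, h2, ih (fun l hl => hy l (by simp [hl]))]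

set_option maxHeartbeats 1000000 in
theorem rule_SE (x z y : List (Fin 3)) (hy : ∀ l ∈ y, l = A ∨ l = B) :
    StrongME (x ++ [A, B] ++ y ++ [B, A] ++ z)
             (x ++ [B, A] ++ y ++ [A, B] ++ z) := by
  intro p q r hperm
  have hC := cntCy hy
  rcases perm_cases p q r hperm with ⟨h1,h2,h3⟩|⟨h1,h2,h3⟩|⟨h1,h2,h3⟩|⟨h1,h2,h3⟩|⟨h1,h2,h3⟩|⟨h1,h2,h3⟩ <;>
    subst h1 <;> subst h2 <;> subst h3 <;>
  refine ⟨?_, ?_, ?_, ?_, ?_, ?_⟩ <;>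
  · simp only [lcount_eq_cnt, cnt1, cnt2, cnt3]
    have hC2 : cnt [(2 : Fin 3)] y = 0 := hC
    simp (config := { decide := true }) [cnt, A, B, C, hC2]
    try ring
    try tauto
end

section
/- Let Σ = {a, b, c} and suppose w = x₁·ab·y₁·ba·z·ba·y₂·ab·x₂ and w' = x₁·ba·y₁·ab·z·ab·y₂·ba·x₂ for words x₁, y₁, z, y₂, x₂ over Σ with |y₁|_c = |y₂|_c. Then w and w' are strongly M-equivalent. -/
/-! Subword counts of length at most three of `u ++ w` are determined by those of `u` and `w`
(Parikh matrices are multiplicative), so M-equivalence is a congruence and the outer words `x₁`,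
`x₂` can be dropped. The two remaining cores consist of the same factors, except that `ab` and
`ba`, which have the same letter counts, trade places. Hence letter and pair counts agree, and
of the triple counts only those of `abc`, `bac`, `cab`, `cba` can change, each by
`±(|y₁|_c - |y₂|_c)`. -/

open Finset

lemma lcount_nil_left (w : List (Fin 3)) : lcount [] w = 1 := by
  induction w with
  | nil => rfl
  | cons a w ih =>
    rw [lcount, (List.sublists_cons_perm_append a w).count_eq, List.count_append, ← lcount, ih,
      List.count_eq_zero.2 (by simp)]

@[simp] lemma lcount_cons_nil (x : Fin 3) (v : List (Fin 3)) : lcount (x :: v) [] = 0 := rfl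

lemma lcount_cons_cons (x a : Fin 3) (v w : List (Fin 3)) :
    lcount (x :: v) (a :: w) = lcount (x :: v) w + if x = a then lcount v w else 0 := by
  rw [lcount, (List.sublists_cons_perm_append a w).count_eq, List.count_append, ← lcount]
  congr 1
  split_ifs with hxa
  · exact hxa ▸ List.count_map_of_injective _ _ List.cons_injective v
  · exact List.count_eq_zero.2 (by simpa using fun _ => Ne.symm hxa)

lemma lcount_singleton (x : Fin 3) (w : List (Fin 3)) : lcount [x] w = w.count x := by
  induction w with
  | nil => rfl
  | cons a w ih =>
    rw [lcount_cons_cons, ih, lcount_nil_left, List.count_cons]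
    exact congrArg _ (if_congr (eq_comm.trans beq_iff_eq.symm) rfl rfl)

lemma lcount_append (v u w : List (Fin 3)) :
    lcount v (u ++ w) = ∑ i ∈ range (v.length + 1), lcount (v.take i) u * lcount (v.drop i) w := by
  induction u generalizing v with
  | nil =>
    cases v with
    | nil => simp [lcount_nil_left]
    | cons x v => simp [sum_range_succ', lcount_nil_left]
  | cons a u ih =>
    cases v with
    | nil => simp [lcount_nil_left]
    | cons x v =>
      rw [List.cons_append, lcount_cons_cons, ih, ih, List.length_cons, sum_range_succ',
        sum_range_succ' _ (v.length + 1)]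
      simp only [List.take_succ_cons, List.drop_succ_cons, lcount_cons_cons, List.take_zero,
        List.drop_zero, lcount_nil_left, add_mul, sum_add_distrib]
      split_ifs
      · ring
      · simp

lemma lcount_singleton_append (x : Fin 3) (u w : List (Fin 3)) :
    lcount [x] (u ++ w) = lcount [x] u + lcount [x] w := by
  simp [lcount_append, sum_range_succ, lcount_nil_left, add_comm]

lemma lcount_pair_append (x y : Fin 3) (u w : List (Fin 3)) :
    lcount [x, y] (u ++ w) = lcount [x, y] u + lcount [x] u * lcount [y] w + lcount [x, y] w := by
  simp only [lcount_append, List.length_cons, List.length_nil, zero_add, Nat.reduceAdd,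
    sum_range_succ, range_one, sum_singleton, List.take_zero, lcount_nil_left, List.drop_zero,
    one_mul, List.take_succ_cons, List.drop_succ_cons, List.take_nil, List.drop_nil, mul_one]
  ring

lemma lcount_triple_append (x y z : Fin 3) (u w : List (Fin 3)) :
    lcount [x, y, z] (u ++ w) = lcount [x, y, z] u + lcount [x, y] u * lcount [z] w
      + lcount [x] u * lcount [y, z] w + lcount [x, y, z] w := by
  simp only [lcount_append, List.length_cons, List.length_nil, zero_add, Nat.reduceAdd,
    sum_range_succ, range_one, sum_singleton, List.take_zero, lcount_nil_left, List.drop_zero,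
    one_mul, List.take_succ_cons, List.drop_succ_cons, List.take_nil, List.drop_nil, mul_one]
  ring

lemma perm_ABC_cases {x y z : Fin 3} (h : [x, y, z].Perm [A, B, C]) :
    x = A ∧ y = B ∧ z = C ∨ x = A ∧ y = C ∧ z = B ∨ x = B ∧ y = A ∧ z = C ∨
      x = B ∧ y = C ∧ z = A ∨ x = C ∧ y = A ∧ z = B ∨ x = C ∧ y = B ∧ z = A := by
  revert x y z h; decide

namespace Mequiv

variable {x y z : Fin 3}

lemma refl (w : List (Fin 3)) : Mequiv x y z w w := ⟨rfl, rfl, rfl, rfl, rfl, rfl⟩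

lemma append {u u' v v' : List (Fin 3)} (hu : Mequiv x y z u u') (hv : Mequiv x y z v v') :
    Mequiv x y z (u ++ v) (u' ++ v') := by
  obtain ⟨hux, huy, huz, huxy, huyz, huxyz⟩ := hu
  obtain ⟨hvx, hvy, hvz, hvxy, hvyz, hvxyz⟩ := hv
  simp only [Mequiv, lcount_singleton_append, lcount_pair_append, lcount_triple_append, *,
    and_self]

lemma swap_ab_ba (h : [x, y, z].Perm [A, B, C]) (y₁ u y₂ : List (Fin 3))
    (hc : y₁.count C = y₂.count C) :
    Mequiv x y z ([A, B] ++ y₁ ++ [B, A] ++ u ++ [B, A] ++ y₂ ++ [A, B])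
      ([B, A] ++ y₁ ++ [A, B] ++ u ++ [A, B] ++ y₂ ++ [B, A]) := by
  rw [← lcount_singleton, ← lcount_singleton, C] at hc
  rcases perm_ABC_cases h with ⟨rfl, rfl, rfl⟩ | ⟨rfl, rfl, rfl⟩ | ⟨rfl, rfl, rfl⟩ |
    ⟨rfl, rfl, rfl⟩ | ⟨rfl, rfl, rfl⟩ | ⟨rfl, rfl, rfl⟩ <;>
  refine ⟨?_, ?_, ?_, ?_, ?_, ?_⟩ <;>
  simp only [lcount_singleton_append, lcount_pair_append, lcount_triple_append,
    lcount_cons_cons, lcount_cons_nil, lcount_nil_left, A, B, C, Fin.isValue, Fin.reduceEq,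
    zero_ne_one, one_ne_zero, ↓reduceIte] <;>
  (try rw [hc]) <;> ring

end Mequiv

theorem strong_two_two (x₁ y₁ z y₂ x₂ : List (Fin 3))
    (h : y₁.count C = y₂.count C) :
    StrongME (x₁ ++ [A, B] ++ y₁ ++ [B, A] ++ z ++ [B, A] ++ y₂ ++ [A, B] ++ x₂)
             (x₁ ++ [B, A] ++ y₁ ++ [A, B] ++ z ++ [A, B] ++ y₂ ++ [B, A] ++ x₂) := by
  intro x y z' hperm
  have core := Mequiv.swap_ab_ba hperm y₁ z y₂ h
  simpa only [List.append_assoc] using (Mequiv.refl x₁).append (core.append (Mequiv.refl x₂))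
end

section
/- Let Σ = {a, b, c}. Suppose w = x₁·ab·y₁·ba·x₂·bc·y₂·cb·x₃·ca·y₃·ac·x₄ and w' = x₁·ba·y₁·ab·x₂·cb·y₂·bc·x₃·ac·y₃·ca·x₄ for words x₁,…,x₄, y₁, y₂, y₃ over Σ, with |y₁|_c = |y₂|_a = |y₃|_b. Then w and w' are strongly M-equivalent. -/
/-!
Say `PairEquiv u v` when `u` and `v` have the same counts of all scattered subwords of length at
most two. This is a congruence for concatenation, and between `PairEquiv` factors the count of a
three-letter subword `xyz` changes additively: replacing `u` by `v` inside any context changes it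
by `|u|_xyz - |v|_xyz`. Swapping the end blocks `pq·m·qp ↦ qp·m·pq` preserves `PairEquiv`, and
changes `|·|_xyz` only through occurrences taking a pair from an end block and the remaining
letter from `m`, i.e. by `±|m|_z` or `±|m|_x`. For the three blocks of the (3·3) transformation
these changes are `±k` or `0` with `k = |y₁|_c = |y₂|_a = |y₃|_b`, and they cancel for every
ordering `xyz` of the alphabet.
-/

namespace List

variable {α : Type*} [DecidableEq α]

def subwordCount : List α → List α → ℕ
  | [], _ => 1
  | _ :: _, [] => 0
  | x :: v, y :: w => subwordCount (x :: v) w + if x = y then subwordCount v w else 0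

@[simp]
theorem subwordCount_nil_left (l : List α) : subwordCount [] l = 1 := by
  cases l <;> rfl

theorem count_sublists'_eq_subwordCount (v l : List α) :
    l.sublists'.count v = subwordCount v l := by
  induction l generalizing v with
  | nil => cases v <;> simp [subwordCount]
  | cons a l ih =>
    rw [sublists'_cons, count_append, ih]
    cases v with
    | nil => simp [count_eq_zero]
    | cons x v =>
      rw [subwordCount]
      by_cases hx : x = a
      · subst hx
        rw [if_pos rfl, count_map_of_injective _ _ cons_injective, ih]
      · rw [if_neg hx, count_eq_zero.2]
        simp [Ne.symm hx]

theorem count_sublists_eq_subwordCount (v l : List α) :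
    l.sublists.count v = subwordCount v l := by
  rw [(sublists_perm_sublists' l).count_eq, count_sublists'_eq_subwordCount]

theorem subwordCount_singleton (x : α) (l : List α) : subwordCount [x] l = l.count x := by
  induction l with
  | nil => rfl
  | cons a l ih =>
    simp only [subwordCount, ih, subwordCount_nil_left, count_cons, beq_iff_eq, eq_comm (a := a)]

theorem subwordCount_pair_append (x y : α) (l r : List α) :
    subwordCount [x, y] (l ++ r) =
      subwordCount [x, y] l + subwordCount [x, y] r + l.count x * r.count y := by
  induction l with
  | nil => simp [subwordCount]
  | cons a l ih =>
    rcases eq_or_ne x a with rfl | h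
    · simp [subwordCount, ih, subwordCount_singleton]
      ring
    · simp [subwordCount, ih, h, Ne.symm h]

theorem subwordCount_triple_append (x y z : α) (l r : List α) :
    subwordCount [x, y, z] (l ++ r) =
      subwordCount [x, y, z] l + subwordCount [x, y, z] r +
        subwordCount [x, y] l * r.count z + l.count x * subwordCount [y, z] r := by
  induction l with
  | nil => simp [subwordCount]
  | cons a l ih =>
    rcases eq_or_ne x a with rfl | h
    · simp [subwordCount, ih, subwordCount_pair_append, subwordCount_singleton]
      ring
    · simp [subwordCount, ih, h, Ne.symm h]

def PairEquiv (u v : List α) : Prop :=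
  (∀ p, u.count p = v.count p) ∧ ∀ p q, subwordCount [p, q] u = subwordCount [p, q] v

namespace PairEquiv

variable {u v w : List α}

theorem trans (h : PairEquiv u v) (h' : PairEquiv v w) : PairEquiv u w :=
  ⟨fun p => (h.1 p).trans (h'.1 p), fun p q => (h.2 p q).trans (h'.2 p q)⟩

theorem append_append (h : PairEquiv u v) (l r : List α) :
    PairEquiv (l ++ u ++ r) (l ++ v ++ r) :=
  ⟨fun p => by simp only [count_append, h.1 p],
    fun p q => by simp only [subwordCount_pair_append, count_append, h.1, h.2]⟩

theorem subwordCount_triple_append_append_sub (h : PairEquiv u v) (l r : List α) (x y z : α) :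
    (subwordCount [x, y, z] (l ++ u ++ r) : ℤ) - subwordCount [x, y, z] (l ++ v ++ r) =
      subwordCount [x, y, z] u - subwordCount [x, y, z] v := by
  simp only [subwordCount_triple_append, subwordCount_pair_append, count_append, h.1, h.2]
  push_cast
  ring

variable {u₁ u₂ u₃ v₁ v₂ v₃ : List α}

theorem append₃ (h₁ : PairEquiv u₁ v₁) (h₂ : PairEquiv u₂ v₂) (h₃ : PairEquiv u₃ v₃)
    (l₁ l₂ l₃ l₄ : List α) :
    PairEquiv (l₁ ++ u₁ ++ l₂ ++ u₂ ++ l₃ ++ u₃ ++ l₄) (l₁ ++ v₁ ++ l₂ ++ v₂ ++ l₃ ++ v₃ ++ l₄) := by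
  have e₁ := h₁.append_append l₁ (l₂ ++ u₂ ++ l₃ ++ u₃ ++ l₄)
  have e₂ := h₂.append_append (l₁ ++ v₁ ++ l₂) (l₃ ++ u₃ ++ l₄)
  have e₃ := h₃.append_append (l₁ ++ v₁ ++ l₂ ++ v₂ ++ l₃) l₄
  simp only [append_assoc] at e₁ e₂ e₃ ⊢
  exact (e₁.trans e₂).trans e₃

theorem subwordCount_triple_append₃_sub (h₁ : PairEquiv u₁ v₁) (h₂ : PairEquiv u₂ v₂)
    (h₃ : PairEquiv u₃ v₃) (l₁ l₂ l₃ l₄ : List α) (x y z : α) :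
    (subwordCount [x, y, z] (l₁ ++ u₁ ++ l₂ ++ u₂ ++ l₃ ++ u₃ ++ l₄) : ℤ) -
        subwordCount [x, y, z] (l₁ ++ v₁ ++ l₂ ++ v₂ ++ l₃ ++ v₃ ++ l₄) =
      (subwordCount [x, y, z] u₁ - subwordCount [x, y, z] v₁) +
        (subwordCount [x, y, z] u₂ - subwordCount [x, y, z] v₂) +
        (subwordCount [x, y, z] u₃ - subwordCount [x, y, z] v₃) := by
  have e₁ := h₁.subwordCount_triple_append_append_sub l₁ (l₂ ++ u₂ ++ l₃ ++ u₃ ++ l₄) x y z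
  have e₂ := h₂.subwordCount_triple_append_append_sub (l₁ ++ v₁ ++ l₂) (l₃ ++ u₃ ++ l₄) x y z
  have e₃ := h₃.subwordCount_triple_append_append_sub (l₁ ++ v₁ ++ l₂ ++ v₂ ++ l₃) l₄ x y z
  simp only [append_assoc] at e₁ e₂ e₃ ⊢
  linarith

end PairEquiv

theorem pairEquiv_swap_ends (p q : α) (m : List α) :
    PairEquiv ([p, q] ++ m ++ [q, p]) ([q, p] ++ m ++ [p, q]) := by
  constructor
  · intro a
    simp only [count_append, count_cons, count_nil]
    ring
  · intro a b
    simp only [subwordCount_pair_append, count_append, count_cons, count_nil]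
    simp only [subwordCount, ite_self, add_zero, zero_add, beq_iff_eq]
    split_ifs <;> omega

def swapDefect (x y z p q : α) (m : List α) : ℤ :=
  ((if x = p ∧ y = q then 1 else 0) - (if x = q ∧ y = p then 1 else 0)) * m.count z +
    ((if y = q ∧ z = p then 1 else 0) - (if y = p ∧ z = q then 1 else 0)) * m.count x

theorem subwordCount_swap_ends_sub {x y z : α} (hxy : x ≠ y) (hyz : y ≠ z) (hxz : x ≠ z)
    (p q : α) (m : List α) :
    (subwordCount [x, y, z] ([p, q] ++ m ++ [q, p]) : ℤ) -
        subwordCount [x, y, z] ([q, p] ++ m ++ [p, q]) = swapDefect x y z p q m := by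
  have hp : p = x ∨ p = y ∨ p = z ∨ (x ≠ p ∧ y ≠ p ∧ z ≠ p) := by tauto
  have hq : q = x ∨ q = y ∨ q = z ∨ (x ≠ q ∧ y ≠ q ∧ z ≠ q) := by tauto
  simp only [subwordCount_triple_append, subwordCount_pair_append, count_append, swapDefect]
  rcases hp with rfl | rfl | rfl | ⟨hxp, hyp, hzp⟩ <;>
    rcases hq with rfl | rfl | rfl | ⟨hxq, hyq, hzq⟩ <;>
    simp_all [subwordCount, eq_comm]

end List

open List

theorem swapDefect_cancel {x y z : Fin 3} (hxy : x ≠ y) (hyz : y ≠ z) (hxz : x ≠ z)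
    {y₁ y₂ y₃ : List (Fin 3)} (h₁ : y₁.count C = y₂.count A) (h₂ : y₂.count A = y₃.count B) :
    swapDefect x y z A B y₁ + swapDefect x y z B C y₂ + swapDefect x y z C A y₃ = 0 := by
  fin_cases x <;> fin_cases y <;> fin_cases z <;>
    simp_all [swapDefect, A, B, C]

theorem mequiv_of_pairEquiv {w w' : List (Fin 3)} (h : PairEquiv w w') (x y z : Fin 3)
    (hxyz : subwordCount [x, y, z] w = subwordCount [x, y, z] w') : Mequiv x y z w w' := by
  simp only [Mequiv, lcount, count_sublists_eq_subwordCount, subwordCount_singleton, h.1, h.2,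
    hxyz, and_self]

theorem strong_three_three (x₁ x₂ x₃ x₄ y₁ y₂ y₃ : List (Fin 3))
    (h₁ : y₁.count C = y₂.count A) (h₂ : y₂.count A = y₃.count B) :
    StrongME
      (x₁ ++ [A, B] ++ y₁ ++ [B, A] ++ x₂ ++ [B, C] ++ y₂ ++ [C, B] ++ x₃ ++
        [C, A] ++ y₃ ++ [A, C] ++ x₄)
      (x₁ ++ [B, A] ++ y₁ ++ [A, B] ++ x₂ ++ [C, B] ++ y₂ ++ [B, C] ++ x₃ ++
        [A, C] ++ y₃ ++ [C, A] ++ x₄) := by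
  intro x y z hperm
  obtain ⟨⟨hxy, hxz⟩, hyz⟩ : (x ≠ y ∧ x ≠ z) ∧ y ≠ z := by
    simpa using hperm.nodup_iff.2 (by decide)
  have hAB := pairEquiv_swap_ends A B y₁
  have hBC := pairEquiv_swap_ends B C y₂
  have hCA := pairEquiv_swap_ends C A y₃
  have hW := PairEquiv.append₃ hAB hBC hCA x₁ x₂ x₃ x₄
  have hT := PairEquiv.subwordCount_triple_append₃_sub hAB hBC hCA x₁ x₂ x₃ x₄ x y z
  simp only [subwordCount_swap_ends_sub hxy hyz hxz, swapDefect_cancel hxy hyz hxz h₁ h₂,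
    sub_eq_zero, Nat.cast_inj] at hT
  simp only [append_assoc] at hW hT ⊢
  exact mequiv_of_pairEquiv hW x y z hT
end

section
/- Suppose w' is obtained from w over Σ = {a,b,c} by simultaneously swapping, at 2t pairwise non-overlapping positions, a two-letter factor ab into ba or ba into ab. For each swapped pair μ_i (enumerated left to right), with w = x_i μ_i y_i, define p_i = −1 and q_i = −|y_i|_c if μ_i = ab, and p_i = 1, q_i = |y_i|_c if μ_i = ba. Then the transformation of w into w' is a strong (2·t) transformation if and only if Σᵢ p_i = Σᵢ q_i = 0. -/
/-- The word `u₀ μ₀ u₁ μ₁ ⋯ μ_{2t-1} u_{2t}` where each `μᵢ` is `ab` (if `μ i = true`)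
or `ba` (if `μ i = false`). -/
def swapWord (t : ℕ) (us : Fin (2 * t + 1) → List (Fin 3)) (μ : Fin (2 * t) → Bool) :
    List (Fin 3) :=
  (List.ofFn (fun i : Fin (2 * t) =>
    us i.castSucc ++ (if μ i then [A, B] else [B, A]))).flatten ++ us (Fin.last (2 * t))

/-- The number of `c`'s strictly to the right of the `i`-th swapped pair. -/
def rightC (t : ℕ) (us : Fin (2 * t + 1) → List (Fin 3)) (i : Fin (2 * t)) : ℤ :=
  ∑ j : Fin (2 * t + 1), if (i : ℕ) < (j : ℕ) then ((us j).count C : ℤ) else 0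

/-- `p i = -1` if the `i`-th pair is `ab`, and `1` if it is `ba`. -/
def pCtr (t : ℕ) (μ : Fin (2 * t) → Bool) (i : Fin (2 * t)) : ℤ :=
  if μ i then -1 else 1

/-- `q i = ∓ (number of c's to the right of the i-th pair)` according to the sign `p i`. -/
def qCtr (t : ℕ) (us : Fin (2 * t + 1) → List (Fin 3)) (μ : Fin (2 * t) → Bool)
    (i : Fin (2 * t)) : ℤ :=
  if μ i then -(rightC t us i) else rightC t us i

/-- The number of `c`'s strictly between the `i`-th and `j`-th swapped pairs (`i < j`). -/
def innerC (t : ℕ) (us : Fin (2 * t + 1) → List (Fin 3)) (i j : Fin (2 * t)) : ℤ :=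
  rightC t us i - rightC t us j

/-- The simultaneous rewriting of the `2t` swapped pairs is a strong `(2·t)`
transformation: the pairs can be matched into `t` factors `β_k`, each of the form
`ab ⋯ ba` or `ba ⋯ ab` (opposite two-letter blocks at the ends), such that the total
inner `c`-count of the factors of the first kind equals that of the second kind. -/
def IsStrong2t (t : ℕ) (us : Fin (2 * t + 1) → List (Fin 3))
    (μ : Fin (2 * t) → Bool) : Prop :=
  ∃ f : Fin t → Fin (2 * t) × Fin (2 * t),
    (∀ k, (f k).1 < (f k).2 ∧ μ ((f k).1) = !(μ ((f k).2))) ∧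
    Function.Bijective (fun p : Fin t × Bool =>
      if p.2 then (f p.1).1 else (f p.1).2) ∧
    (∑ k : Fin t, if μ ((f k).1) then innerC t us (f k).1 (f k).2 else 0) =
      (∑ k : Fin t, if μ ((f k).1) then 0 else innerC t us (f k).1 (f k).2)

/-- `w` transforms into `w'` by some strong `(2·t)` transformation. -/
def StrongTrans (t : ℕ) (w w' : List (Fin 3)) : Prop :=
  ∃ us μ, IsStrong2t t us μ ∧ w = swapWord t us μ ∧
    w' = swapWord t us (fun i => !(μ i))


lemma exists_pairing {t : ℕ} (μ : Fin (2*t) → Bool)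
    (hT : (Finset.univ.filter (fun i => μ i = true)).card = t)
    (hF : (Finset.univ.filter (fun i => ¬ μ i = true)).card = t) :
    ∃ f : Fin t → Fin (2*t) × Fin (2*t),
      (∀ k, (f k).1 < (f k).2 ∧ μ ((f k).1) = !(μ ((f k).2))) ∧
      Function.Bijective (fun p : Fin t × Bool => if p.2 then (f p.1).1 else (f p.1).2) := by
  classical
  let e1 := (Finset.equivFinOfCardEq hT).symm
  let e2 := (Finset.equivFinOfCardEq hF).symm
  have hμ1 : ∀ k, μ (e1 k : Fin (2*t)) = true := fun k => (Finset.mem_filter.mp (e1 k).2).2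
  have hμ2 : ∀ k, μ (e2 k : Fin (2*t)) = false := by
    intro k
    have := (Finset.mem_filter.mp (e2 k).2).2
    simpa using this
  have hne : ∀ k, (e1 k : Fin (2*t)) ≠ (e2 k : Fin (2*t)) := by
    intro k h
    have h1 := hμ1 k
    rw [h, hμ2 k] at h1
    exact absurd h1 (by simp)
  refine ⟨fun k => if ((e1 k : Fin (2*t)) < (e2 k : Fin (2*t)))
      then ((e1 k : Fin (2*t)), (e2 k : Fin (2*t)))
      else ((e2 k : Fin (2*t)), (e1 k : Fin (2*t))), ?_, ?_⟩
  · intro k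
    by_cases hlt : (e1 k : Fin (2*t)) < (e2 k : Fin (2*t))
    · simp [hlt, hμ1, hμ2]
    · have : (e2 k : Fin (2*t)) < (e1 k : Fin (2*t)) :=
        lt_of_le_of_ne (not_lt.mp hlt) ((hne k).symm)
      simp [hlt, this, hμ1, hμ2]
  · set g := fun p : Fin t × Bool =>
      if p.2 then (if ((e1 p.1 : Fin (2*t)) < (e2 p.1 : Fin (2*t)))
        then ((e1 p.1 : Fin (2*t)), (e2 p.1 : Fin (2*t)))
        else ((e2 p.1 : Fin (2*t)), (e1 p.1 : Fin (2*t)))).1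
      else (if ((e1 p.1 : Fin (2*t)) < (e2 p.1 : Fin (2*t)))
        then ((e1 p.1 : Fin (2*t)), (e2 p.1 : Fin (2*t)))
        else ((e2 p.1 : Fin (2*t)), (e1 p.1 : Fin (2*t)))).2 with hgdef
    have key : ∀ k b, (if μ (g (k,b)) then ((e1 k : Fin (2*t))) else ((e2 k : Fin (2*t)))) = g (k,b) := by
      intro k b
      by_cases hlt : (e1 k : Fin (2*t)) < (e2 k : Fin (2*t)) <;>
        cases b <;> simp [hgdef, hlt, hμ1, hμ2]
    have hgne : ∀ k, g (k, true) ≠ g (k, false) := by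
      intro k
      by_cases hlt : (e1 k : Fin (2*t)) < (e2 k : Fin (2*t)) <;>
        simp [hgdef, hlt, hne k, (hne k).symm]
    rw [Fintype.bijective_iff_injective_and_card]
    constructor
    · rintro ⟨k, b⟩ ⟨k', b'⟩ hEq
      have hkk : k = k' := by
        have h5 := key k b
        have h6 := key k' b'
        rw [show g (k, b) = g (k', b') from hEq] at h5
        cases hμ : μ (g (k', b')) <;> rw [hμ] at h5 h6 <;> simp at h5 h6
        · exact e2.injective (Subtype.coe_injective (h5.trans h6.symm))
        · exact e1.injective (Subtype.coe_injective (h5.trans h6.symm))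
      subst hkk
      have hbb : b = b' := by
        cases b <;> cases b'
        · rfl
        · exact absurd hEq.symm (hgne k)
        · exact absurd hEq (hgne k)
        · rfl
      simp [hbb]
    · simp [Fintype.card_prod]
      ring


lemma pair_sum {t : ℕ} (f : Fin t → Fin (2*t) × Fin (2*t))
    (hg : Function.Bijective (fun p : Fin t × Bool => if p.2 then (f p.1).1 else (f p.1).2))
    (h : Fin (2*t) → ℤ) :
    ∑ i, h i = ∑ k, (h (f k).1 + h (f k).2) := by
  rw [← Fintype.sum_bijective _ hg
      (fun p : Fin t × Bool => h (if p.2 then (f p.1).1 else (f p.1).2)) h (fun _ => rfl)]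
  rw [Fintype.sum_prod_type]
  simp [Fintype.sum_bool]

lemma sum_p_zero {t : ℕ} (μ : Fin (2*t) → Bool) (f : Fin t → Fin (2*t) × Fin (2*t))
    (h1 : ∀ k, (f k).1 < (f k).2 ∧ μ ((f k).1) = !(μ ((f k).2)))
    (hg : Function.Bijective (fun p : Fin t × Bool => if p.2 then (f p.1).1 else (f p.1).2)) :
    ∑ i, pCtr t μ i = 0 := by
  rw [pair_sum f hg]
  apply Finset.sum_eq_zero
  intro k _
  have := (h1 k).2
  unfold pCtr
  cases hb : μ (f k).2 <;> rw [hb] at this <;> simp [this, hb]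

lemma sum_q_eq {t : ℕ} (us : Fin (2 * t + 1) → List (Fin 3)) (μ : Fin (2*t) → Bool)
    (f : Fin t → Fin (2*t) × Fin (2*t))
    (h1 : ∀ k, (f k).1 < (f k).2 ∧ μ ((f k).1) = !(μ ((f k).2)))
    (hg : Function.Bijective (fun p : Fin t × Bool => if p.2 then (f p.1).1 else (f p.1).2)) :
    ∑ i, qCtr t us μ i =
      (∑ k : Fin t, if μ ((f k).1) then 0 else innerC t us (f k).1 (f k).2) -
      (∑ k : Fin t, if μ ((f k).1) then innerC t us (f k).1 (f k).2 else 0) := by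
  rw [pair_sum f hg, ← Finset.sum_sub_distrib]
  apply Finset.sum_congr rfl
  intro k _
  have := (h1 k).2
  unfold qCtr innerC
  cases hb : μ (f k).2 <;> rw [hb] at this <;> simp [this, hb] <;> ring

theorem strong2t_iff_sums_zero (t : ℕ) (ht : 1 ≤ t)
    (us : Fin (2 * t + 1) → List (Fin 3)) (μ : Fin (2 * t) → Bool) :
    IsStrong2t t us μ ↔
      (∑ i : Fin (2 * t), pCtr t μ i = 0 ∧ ∑ i : Fin (2 * t), qCtr t us μ i = 0) := by
  constructor
  · rintro ⟨f, h1, hg, hbal⟩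
    refine ⟨sum_p_zero μ f h1 hg, ?_⟩
    rw [sum_q_eq us μ f h1 hg, hbal, sub_self]
  · rintro ⟨hp, hq⟩
    have hcards : (Finset.univ.filter (fun i : Fin (2*t) => μ i = true)).card +
        (Finset.univ.filter (fun i : Fin (2*t) => ¬ μ i = true)).card = 2 * t := by
      rw [Finset.card_filter_add_card_filter_not]
      simp
    have hT1 : ∑ i ∈ Finset.univ.filter (fun i : Fin (2*t) => μ i = true), pCtr t μ i =
        -((Finset.univ.filter (fun i : Fin (2*t) => μ i = true)).card : ℤ) := by
      rw [Finset.sum_congr rfl (fun i hi => show pCtr t μ i = -1 by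
        simp [pCtr, (Finset.mem_filter.mp hi).2])]
      simp
    have hF1 : ∑ i ∈ Finset.univ.filter (fun i : Fin (2*t) => ¬ μ i = true), pCtr t μ i =
        ((Finset.univ.filter (fun i : Fin (2*t) => ¬ μ i = true)).card : ℤ) := by
      rw [Finset.sum_congr rfl (fun i hi => show pCtr t μ i = 1 by
        simp [pCtr, (Finset.mem_filter.mp hi).2])]
      simp
    have hsplit := Finset.sum_filter_add_sum_filter_not Finset.univ
      (fun i : Fin (2*t) => μ i = true) (pCtr t μ)
    rw [hp, hT1, hF1] at hsplit
    have hT : (Finset.univ.filter (fun i : Fin (2*t) => μ i = true)).card = t := by omega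
    have hF : (Finset.univ.filter (fun i : Fin (2*t) => ¬ μ i = true)).card = t := by omega
    obtain ⟨f, h1, hg⟩ := exists_pairing μ hT hF
    refine ⟨f, h1, hg, ?_⟩
    rw [sum_q_eq us μ f h1 hg] at hq
    exact (sub_eq_zero.mp hq).symm
end

section
/- Suppose w' is obtained from w over Σ = {a,b,c} by a strong (2·t) transformation with associated ordered pairs (p_i, q_i), 1 ≤ i ≤ 2t (where p_i = ∓1 records whether the i-th swapped pair is ab or ba, and q_i = p_i · (number of c's to the right of it in w)). Then the transformation is reducible (i.e., factors as a strong (2·t₁) followed by a strong (2·t₂) transformation with t₁ + t₂ = t, t₁, t₂ > 0) if and only if there exists a nonempty proper subset I ⊊ {1, …, 2t} with Σ_{i∈I} p_i = Σ_{i∈I} q_i = 0. -/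
namespace Strong2t

def blk (b : Bool) : List (Fin 3) := if b then [A, B] else [B, A]

@[simp] lemma length_blk (b : Bool) : (blk b).length = 2 := by cases b <;> rfl

@[simp] lemma count_C_blk (b : Bool) : (blk b).count C = 0 := by cases b <;> rfl

def swapAB : Fin 3 → Fin 3 := ![B, A, C]

@[simp] lemma swapAB_swapAB (x : Fin 3) : swapAB (swapAB x) = x := by
  fin_cases x <;> rfl

lemma swapAB_eq_self_iff (x : Fin 3) : swapAB x = x ↔ x = C := by
  fin_cases x <;> decide

lemma swapAB_eq_C_iff (x : Fin 3) : swapAB x = C ↔ x = C := by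
  fin_cases x <;> decide

lemma eq_take_append_append_drop {α : Type*} {w : List α} {s : ℕ} {x y : α}
    (hx : w[s]? = some x) (hy : w[s + 1]? = some y) :
    w = w.take s ++ [x, y] ++ w.drop (s + 2) := by
  obtain ⟨hs, rfl⟩ := List.getElem?_eq_some_iff.mp hx
  obtain ⟨hs1, rfl⟩ := List.getElem?_eq_some_iff.mp hy
  rw [List.append_assoc, List.cons_append, List.cons_append, List.nil_append,
    ← List.drop_eq_getElem_cons hs1, ← List.drop_eq_getElem_cons hs, List.take_append_drop]

open scoped Classical in
/-- On a block `ab` or `ba`, exchanging `a ↔ b` letterwise is the same as swapping its two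
letters; in this form flips compose by symmetric difference of their position sets. -/
noncomputable def flipAt (D : Set ℕ) (w : List (Fin 3)) : List (Fin 3) :=
  w.mapIdx fun m x => if m ∈ D then swapAB x else x

section flipAt

variable {D D' : Set ℕ} {w : List (Fin 3)} {m : ℕ}

@[simp] lemma length_flipAt : (flipAt D w).length = w.length := List.length_mapIdx

lemma getElem?_flipAt_of_mem (h : m ∈ D) : (flipAt D w)[m]? = w[m]?.map swapAB := by
  simp [flipAt, List.getElem?_mapIdx, h]

lemma getElem?_flipAt_of_notMem (h : m ∉ D) : (flipAt D w)[m]? = w[m]? := by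
  simp [flipAt, List.getElem?_mapIdx, h]

lemma flipAt_append (u v : List (Fin 3)) :
    flipAt D (u ++ v) = flipAt D u ++ flipAt ((· + u.length) ⁻¹' D) v := by
  simp only [flipAt, List.mapIdx_append]
  rfl

lemma flipAt_flipAt : flipAt D' (flipAt D w) = flipAt (symmDiff D D') w := by
  refine List.ext_getElem? fun m => ?_
  by_cases h : m ∈ D <;> by_cases h' : m ∈ D' <;>
    simp [getElem?_flipAt_of_mem, getElem?_flipAt_of_notMem, Set.mem_symmDiff, h, h',
      Option.map_map, Function.comp_def]

lemma flipAt_eq_self (h : ∀ m < w.length, m ∉ D) : flipAt D w = w := by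
  refine List.ext_getElem? fun m => ?_
  by_cases hm : m < w.length
  · exact getElem?_flipAt_of_notMem (h m hm)
  · simp [not_lt.mp hm]

lemma drop_flipAt (k : ℕ) : (flipAt D w).drop k = flipAt ((· + k) ⁻¹' D) (w.drop k) := by
  refine List.ext_getElem? fun m => ?_
  by_cases h : k + m ∈ D
  · rw [List.getElem?_drop, getElem?_flipAt_of_mem h, getElem?_flipAt_of_mem (by simpa [add_comm]),
      List.getElem?_drop]
  · rw [List.getElem?_drop, getElem?_flipAt_of_notMem h,
      getElem?_flipAt_of_notMem (by simpa [add_comm]), List.getElem?_drop]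

lemma count_C_flipAt : (flipAt D w).count C = w.count C := by
  classical
  induction w generalizing D with
  | nil => rfl
  | cons x w ih =>
    have hx : ((if 0 ∈ D then swapAB x else x) == C) = (x == C) := by
      split_ifs <;> simp [swapAB_eq_C_iff]
    have := ih (D := (· + 1) ⁻¹' D)
    simp_all [flipAt, List.mapIdx_cons, List.count_cons]

def abPositions (w : List (Fin 3)) : Set ℕ := {m | ∃ x ≠ C, w[m]? = some x}

@[simp] lemma abPositions_flipAt : abPositions (flipAt D w) = abPositions w := by
  ext m
  by_cases h : m ∈ D
  · simp only [abPositions, Set.mem_ofPred_eq, getElem?_flipAt_of_mem h, Option.map_eq_some_iff]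
    constructor
    · rintro ⟨_, hC, x, hx, rfl⟩
      exact ⟨x, by rwa [ne_eq, swapAB_eq_C_iff] at hC, hx⟩
    · rintro ⟨x, hC, hx⟩
      exact ⟨swapAB x, by rwa [ne_eq, swapAB_eq_C_iff], x, hx, rfl⟩
  · simp only [abPositions, Set.mem_ofPred_eq, getElem?_flipAt_of_notMem h]

lemma eq_of_flipAt_eq (hD : D ⊆ abPositions w) (hD' : D' ⊆ abPositions w)
    (h : flipAt D w = flipAt D' w) : D = D' := by
  suffices ∀ {D D'}, D ⊆ abPositions w → flipAt D w = flipAt D' w → D ⊆ D' from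
    (this hD h).antisymm (this hD' h.symm)
  intro D D' hD h m hm
  by_contra hm'
  obtain ⟨x, hC, hx⟩ := hD hm
  have := congrArg (·[m]?) h
  simp only [getElem?_flipAt_of_mem hm, getElem?_flipAt_of_notMem hm', hx, Option.map_some,
    Option.some.injEq, swapAB_eq_self_iff] at this
  exact hC this

end flipAt

def dominoes (S : Finset ℕ) : Finset ℕ := S ∪ S.image (· + 1)

def Separated (S : Finset ℕ) : Prop := ∀ s ∈ S, s + 1 ∉ S

section dominoes

variable {S T S₁ S₂ : Finset ℕ}

lemma mem_dominoes {m : ℕ} : m ∈ dominoes S ↔ m ∈ S ∨ ∃ s ∈ S, s + 1 = m := by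
  simp [dominoes]

lemma dominoes_union : dominoes (S ∪ T) = dominoes S ∪ dominoes T := by
  ext m
  simp only [mem_dominoes, Finset.mem_union]
  grind

lemma card_dominoes (hS : Separated S) : (dominoes S).card = 2 * S.card := by
  rw [dominoes, Finset.card_union_of_disjoint,
    Finset.card_image_of_injective _ (add_left_injective 1)]
  · ring
  · rw [Finset.disjoint_right]
    intro m hm
    obtain ⟨s, hs, rfl⟩ := Finset.mem_image.mp hm
    exact hS s hs

/-- Tilings of a set of naturals by dominoes `{s, s + 1}` are unique: the leftmost cell is
covered by the domino starting there. -/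
lemma eq_of_dominoes_eq (hS : Separated S) (hT : Separated T) (h : dominoes S = dominoes T) :
    S = T := by
  suffices ∀ {S T}, Separated S → Separated T → dominoes S = dominoes T → S ⊆ T
    from
    (this hS hT h).antisymm (this hT hS h.symm)
  intro S T hS hT h m
  induction m using Nat.strong_induction_on with
  | _ m ih =>
    intro hm
    have hmT : m ∈ dominoes T := h ▸ mem_dominoes.mpr (Or.inl hm)
    obtain hmT | ⟨t, ht, rfl⟩ := mem_dominoes.mp hmT
    · exact hmT
    · obtain htS | ⟨s, hs, rfl⟩ := mem_dominoes.mp (h ▸ mem_dominoes.mpr (Or.inl ht))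
      · exact absurd hm (hS t htS)
      · exact absurd ht (hT s (ih s (by omega) hs))

lemma separated_union (hS : Separated S) (hT : Separated T)
    (h : Disjoint (dominoes S) (dominoes T)) : Separated (S ∪ T) := by
  simp only [Separated, Finset.disjoint_left, mem_dominoes, Finset.mem_union] at *
  grind

lemma disjoint_dominoes (hST : Separated (S ∪ T)) (h : Disjoint S T) :
    Disjoint (dominoes S) (dominoes T) := by
  simp only [Separated, Finset.disjoint_left, mem_dominoes, Finset.mem_union] at *
  grind

lemma eq_union_of_dominoes_eq_symmDiff (hS : Separated S) (hS₁ : Separated S₁)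
    (hS₂ : Separated S₂) (hcard : S.card = S₁.card + S₂.card)
    (h : dominoes S = symmDiff (dominoes S₁) (dominoes S₂)) : S = S₁ ∪ S₂ := by
  have hcard' : (dominoes S).card = (dominoes S₁).card + (dominoes S₂).card := by
    rw [card_dominoes hS, card_dominoes hS₁, card_dominoes hS₂]; omega
  have hunion : dominoes S = dominoes S₁ ∪ dominoes S₂ :=
    Finset.eq_of_subset_of_card_le (h ▸ symmDiff_le_sup)
      (hcard' ▸ Finset.card_union_le _ _)
  have hdisj : Disjoint (dominoes S₁) (dominoes S₂) :=
    Finset.card_union_eq_card_add_card.mp (hunion ▸ hcard')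
  exact eq_of_dominoes_eq hS (separated_union hS₁ hS₂ hdisj) (hunion.trans dominoes_union.symm)

lemma Separated.disjoint_dominoes_sdiff (hS : Separated S) (h : S₁ ⊆ S) :
    Disjoint (dominoes S₁) (dominoes (S \ S₁)) :=
  disjoint_dominoes (by rwa [Finset.union_sdiff_of_subset h]) Finset.disjoint_sdiff

lemma Separated.notMem_dominoes_of_mem_sdiff (hS : Separated S) (h : S₁ ⊆ S) {s : ℕ}
    (hs : s ∈ S \ S₁) : s ∉ dominoes S₁ ∧ s + 1 ∉ dominoes S₁ :=
  ⟨Finset.disjoint_right.mp (hS.disjoint_dominoes_sdiff h) (mem_dominoes.mpr (Or.inl hs)),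
    Finset.disjoint_right.mp (hS.disjoint_dominoes_sdiff h)
      (mem_dominoes.mpr (Or.inr ⟨s, hs, rfl⟩))⟩

lemma symmDiff_dominoes_sdiff (hS : Separated S) (h : S₁ ⊆ S) :
    symmDiff (dominoes S₁) (dominoes (S \ S₁)) = dominoes S := by
  rw [(hS.disjoint_dominoes_sdiff h).symmDiff_eq_sup, Finset.sup_eq_union, ← dominoes_union,
    Finset.union_sdiff_of_subset h]

end dominoes

def HasBlockAt (w : List (Fin 3)) (s : ℕ) : Prop :=
  w[s]? = some A ∧ w[s + 1]? = some B ∨ w[s]? = some B ∧ w[s + 1]? = some A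

def IsBlockSet (w : List (Fin 3)) (S : Finset ℕ) : Prop :=
  Separated S ∧ ∀ s ∈ S, HasBlockAt w s

/-- The values `p` and `q` of the block of `w` starting at position `s`. -/
def pAt (w : List (Fin 3)) (s : ℕ) : ℤ := if w[s]? = some A then -1 else 1

def qAt (w : List (Fin 3)) (s : ℕ) : ℤ := pAt w s * ((w.drop (s + 2)).count C : ℤ)

def IsBalanced (w : List (Fin 3)) (S : Finset ℕ) : Prop :=
  ∑ s ∈ S, pAt w s = 0 ∧ ∑ s ∈ S, qAt w s = 0

section blocks

variable {w : List (Fin 3)} {D : Set ℕ} {s : ℕ} {S S₁ : Finset ℕ}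

lemma HasBlockAt.exists_eq_take_append_blk_append_drop (h : HasBlockAt w s) :
    ∃ b, w = w.take s ++ blk b ++ w.drop (s + 2) := by
  rcases h with ⟨hA, hB⟩ | ⟨hB, hA⟩
  · exact ⟨true, eq_take_append_append_drop hA hB⟩
  · exact ⟨false, eq_take_append_append_drop hB hA⟩

lemma HasBlockAt.flipAt (h : HasBlockAt w s) (hs : s ∉ D) (hs1 : s + 1 ∉ D) :
    HasBlockAt (flipAt D w) s := by
  rwa [HasBlockAt, getElem?_flipAt_of_notMem hs, getElem?_flipAt_of_notMem hs1]

lemma IsBlockSet.mono (h : IsBlockSet w S) (hS₁ : S₁ ⊆ S) : IsBlockSet w S₁ :=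
  ⟨fun s hs hs1 => h.1 s (hS₁ hs) (hS₁ hs1), fun s hs => h.2 s (hS₁ hs)⟩

lemma IsBlockSet.dominoes_subset (h : IsBlockSet w S) : ↑(dominoes S) ⊆ abPositions w := by
  intro m hm
  obtain hm | ⟨s, hs, rfl⟩ := mem_dominoes.mp hm
  · rcases h.2 m hm with ⟨hx, -⟩ | ⟨hx, -⟩ <;> exact ⟨_, by decide, hx⟩
  · rcases h.2 s hs with ⟨-, hx⟩ | ⟨-, hx⟩ <;> exact ⟨_, by decide, hx⟩

lemma IsBlockSet.flipAt_sdiff (h : IsBlockSet w S) (hS₁ : S₁ ⊆ S) :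
    IsBlockSet (flipAt (dominoes S₁) w) (S \ S₁) :=
  ⟨(h.mono Finset.sdiff_subset).1, fun s hs => (h.2 s (Finset.sdiff_subset hs)).flipAt
    (h.1.notMem_dominoes_of_mem_sdiff hS₁ hs).1 (h.1.notMem_dominoes_of_mem_sdiff hS₁ hs).2⟩

lemma pAt_flipAt (hs : s ∉ D) : pAt (flipAt D w) s = pAt w s := by
  rw [pAt, pAt, getElem?_flipAt_of_notMem hs]

lemma qAt_flipAt (hs : s ∉ D) : qAt (flipAt D w) s = qAt w s := by
  rw [qAt, qAt, pAt_flipAt hs, drop_flipAt, count_C_flipAt]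

lemma IsBalanced.even_card (h : IsBalanced w S) : Even S.card := by
  rw [← ZMod.natCast_eq_zero_iff_even, Finset.card_eq_sum_ones, Nat.cast_sum]
  have := congrArg (Int.cast : ℤ → ZMod 2) h.1
  rw [Int.cast_sum, Int.cast_zero] at this
  rw [← this]
  refine Finset.sum_congr rfl fun s _ => ?_
  unfold pAt
  split_ifs <;> rfl

lemma IsBlockSet.drop {k : ℕ} (h : IsBlockSet w S) (hk : ∀ s ∈ S, k ≤ s) :
    IsBlockSet (w.drop k) (S.image (· - k)) := by
  simp only [IsBlockSet, Separated, Finset.mem_image, forall_exists_index, and_imp,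
    forall_apply_eq_imp_iff₂]
  refine ⟨fun s hs ⟨s', hs', hss'⟩ => h.1 s hs ?_, fun s hs => ?_⟩
  · have := hk s hs; have := hk s' hs'
    rwa [show s + 1 = s' by omega]
  · have := hk s hs
    simpa only [HasBlockAt, List.getElem?_drop, show k + (s - k) = s by omega,
      show k + (s - k + 1) = s + 1 by omega] using h.2 s hs

end blocks

def blockWord (n : ℕ) (v : Fin (n + 1) → List (Fin 3)) (ν : Fin n → Bool) : List (Fin 3) :=
  (List.ofFn fun i : Fin n => v i.castSucc ++ blk (ν i)).flatten ++ v (Fin.last n)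

/-- The position `|v 0| + ⋯ + |v i| + 2 i` of the `i`-th block in `blockWord n v ν`. -/
def blockStart : (n : ℕ) → (Fin (n + 1) → List (Fin 3)) → Fin n → ℕ
  | 0, _ => Fin.elim0
  | n + 1, v => Fin.cases (v 0).length fun i => (v 0).length + 2 + blockStart n (Fin.tail v) i

section blockWord

variable {n : ℕ} {v : Fin (n + 1) → List (Fin 3)} {ν : Fin n → Bool}

lemma swapWord_eq_blockWord (t : ℕ) (us : Fin (2 * t + 1) → List (Fin 3))
    (μ : Fin (2 * t) → Bool) : swapWord t us μ = blockWord (2 * t) us μ := rfl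

lemma blockWord_succ (v : Fin (n + 2) → List (Fin 3)) (ν : Fin (n + 1) → Bool) :
    blockWord (n + 1) v ν = v 0 ++ blk (ν 0) ++ blockWord n (Fin.tail v) (Fin.tail ν) := by
  simp [blockWord, List.ofFn_succ, Fin.tail, Fin.succ_last, List.append_assoc]

@[simp] lemma blockStart_succ_zero (v : Fin (n + 2) → List (Fin 3)) :
    blockStart (n + 1) v 0 = (v 0).length := rfl

@[simp] lemma blockStart_succ_succ (v : Fin (n + 2) → List (Fin 3)) (i : Fin n) :
    blockStart (n + 1) v i.succ = (v 0).length + 2 + blockStart n (Fin.tail v) i := rfl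

lemma add_two_le_blockStart {i j : Fin n} (h : i < j) :
    blockStart n v i + 2 ≤ blockStart n v j := by
  induction n with
  | zero => exact i.elim0
  | succ n ih =>
    cases i using Fin.cases with
    | zero =>
      cases j using Fin.cases with
      | zero => exact absurd h (lt_irrefl 0)
      | succ j => simp
    | succ i =>
      cases j using Fin.cases with
      | zero => exact absurd h (Fin.succ_pos i).not_gt
      | succ j =>
        have := ih (v := Fin.tail v) (Fin.succ_lt_succ_iff.mp h)
        simp only [blockStart_succ_succ]
        omega

lemma blockStart_injective : Function.Injective (blockStart n v) := by
  intro i j h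
  by_contra hij
  rcases lt_or_gt_of_ne hij with hlt | hlt
  · exact absurd h (add_two_le_blockStart hlt |>.trans_lt' (by omega) |>.ne)
  · exact absurd h (add_two_le_blockStart hlt |>.trans_lt' (by omega) |>.ne')

lemma card_image_blockStart : (Finset.univ.image (blockStart n v)).card = n := by
  rw [Finset.card_image_of_injective _ blockStart_injective, Finset.card_univ, Fintype.card_fin]

lemma count_C_blockWord : (blockWord n v ν).count C = ∑ j, (v j).count C := by
  induction n with
  | zero => simp [blockWord]
  | succ n ih =>
    rw [blockWord_succ, List.count_append, List.count_append, ih, count_C_blk,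
      Fin.sum_univ_succ (f := fun j => (v j).count C)]
    rfl

lemma drop_blockStart (i : Fin n) :
    ∃ rest, (blockWord n v ν).drop (blockStart n v i) = blk (ν i) ++ rest ∧
      rest.count C = ∑ j : Fin (n + 1), if (i : ℕ) < j then (v j).count C else 0 := by
  induction n with
  | zero => exact i.elim0
  | succ n ih =>
    rw [blockWord_succ]
    cases i using Fin.cases with
    | zero =>
      refine ⟨_, by rw [List.append_assoc]; exact List.drop_left' rfl, ?_⟩
      simp [count_C_blockWord, Fin.sum_univ_succ, Fin.tail]
    | succ i =>
      obtain ⟨rest, hdrop, hcount⟩ := ih (v := Fin.tail v) (ν := Fin.tail ν) i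
      refine ⟨rest, ?_, ?_⟩
      · rw [blockStart_succ_succ, ← List.drop_drop, List.drop_left' (by simp)]
        exact hdrop
      · simp [hcount, Fin.sum_univ_succ, Fin.tail]

lemma getElem?_blockStart (i : Fin n) :
    (blockWord n v ν)[blockStart n v i]? = some (if ν i then A else B) ∧
      (blockWord n v ν)[blockStart n v i + 1]? = some (if ν i then B else A) := by
  obtain ⟨rest, hdrop, -⟩ := drop_blockStart (ν := ν) i
  have h0 := congrArg (·[0]?) hdrop
  have h1 := congrArg (·[1]?) hdrop
  simp only [List.getElem?_drop, add_zero] at h0 h1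
  rw [h0, h1]
  cases ν i <;> exact ⟨rfl, rfl⟩

lemma hasBlockAt_blockStart (i : Fin n) : HasBlockAt (blockWord n v ν) (blockStart n v i) := by
  have := getElem?_blockStart (v := v) (ν := ν) i
  cases h : ν i <;> simp only [h] at this <;> simp [HasBlockAt, this]

lemma pAt_blockStart (i : Fin n) :
    pAt (blockWord n v ν) (blockStart n v i) = if ν i then -1 else 1 := by
  rw [pAt, (getElem?_blockStart i).1]
  cases ν i <;> rfl

lemma qAt_blockStart (i : Fin n) :
    qAt (blockWord n v ν) (blockStart n v i) = (if ν i then -1 else 1) *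
      ∑ j : Fin (n + 1), if (i : ℕ) < j then ((v j).count C : ℤ) else 0 := by
  obtain ⟨rest, hdrop, hcount⟩ := drop_blockStart (ν := ν) i
  rw [qAt, pAt_blockStart, ← List.drop_drop, hdrop, List.drop_left' (length_blk _), hcount]
  push_cast
  rfl

lemma isBlockSet_image_blockStart :
    IsBlockSet (blockWord n v ν) (Finset.univ.image (blockStart n v)) := by
  refine ⟨?_, ?_⟩
  · simp only [Separated, Finset.mem_image, Finset.mem_univ, true_and]
    rintro _ ⟨i, rfl⟩ ⟨j, hj⟩
    rcases lt_trichotomy i j with h | rfl | h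
    · have := add_two_le_blockStart (v := v) h; omega
    · omega
    · have := add_two_le_blockStart (v := v) h; omega
  · simp only [Finset.mem_image, Finset.mem_univ, true_and]
    rintro _ ⟨i, rfl⟩
    exact hasBlockAt_blockStart i

lemma image_blockStart_succ (v : Fin (n + 2) → List (Fin 3)) :
    Finset.univ.image (blockStart (n + 1) v) = insert (v 0).length
      ((Finset.univ.image (blockStart n (Fin.tail v))).image (· + ((v 0).length + 2))) := by
  ext m
  simp only [Finset.mem_image, Finset.mem_univ, true_and, Finset.mem_insert, Fin.exists_fin_succ,
    blockStart_succ_zero, blockStart_succ_succ, exists_exists_eq_and]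
  grind

lemma flipAt_blk {D : Set ℕ} (h0 : 0 ∈ D) (h1 : 1 ∈ D) (b : Bool) :
    flipAt D (blk b) = blk !b := by
  cases b <;> simp [flipAt, blk, h0, h1, swapAB, A, B]

lemma blockWord_not :
    blockWord n v (fun i => !ν i) =
      flipAt (dominoes (Finset.univ.image (blockStart n v))) (blockWord n v ν) := by
  induction n with
  | zero => simp [blockWord, dominoes, flipAt_eq_self]
  | succ n ih =>
    rw [blockWord_succ, blockWord_succ, flipAt_append, flipAt_append, image_blockStart_succ]
    congr 2
    · refine (flipAt_eq_self fun m hm hD => ?_).symm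
      simp [mem_dominoes] at hD
      omega
    · exact (flipAt_blk (by simp [mem_dominoes]) (by simp [mem_dominoes, add_comm]) _).symm
    · convert ih (v := Fin.tail v) (ν := Fin.tail ν) using 2
      · rfl
      · ext m
        simp [mem_dominoes]
        grind

end blockWord

lemma image_add_image_sub {S : Finset ℕ} {k : ℕ} (hk : ∀ s ∈ S, k ≤ s) :
    (S.image (· - k)).image (· + k) = S := by
  rw [Finset.image_image]
  conv_rhs => rw [← Finset.image_id (s := S)]
  exact Finset.image_congr fun s hs => Nat.sub_add_cancel (hk s hs)

lemma IsBlockSet.exists_blockWord {n : ℕ} {w : List (Fin 3)} {S : Finset ℕ}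
    (h : IsBlockSet w S) (hn : S.card = n) :
    ∃ v ν, w = blockWord n v ν ∧ Finset.univ.image (blockStart n v) = S := by
  induction n generalizing w S with
  | zero =>
    refine ⟨fun _ => w, Fin.elim0, by simp [blockWord], ?_⟩
    simp [Finset.card_eq_zero.mp hn]
  | succ n ih =>
    have hne : S.Nonempty := Finset.card_pos.mp (by omega)
    set s₀ := S.min' hne
    have hge : ∀ s ∈ S.erase s₀, s₀ + 2 ≤ s := fun s hs => by
      have := S.min'_lt_of_mem_erase_min' hne hs
      have := h.1 s₀ (S.min'_mem hne)
      have := (Finset.mem_erase.mp hs).2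
      grind
    obtain ⟨b, hw⟩ := (h.2 s₀ (S.min'_mem hne)).exists_eq_take_append_blk_append_drop
    obtain ⟨v, ν, hv, himage⟩ := ih ((h.mono (S.erase_subset s₀)).drop hge)
      (by rw [Finset.card_image_of_injOn (fun x hx y hy hxy => by
            have := hge x hx; have := hge y hy; omega),
          Finset.card_erase_of_mem (S.min'_mem hne), hn, Nat.add_sub_cancel])
    have hlen : (w.take s₀).length = s₀ := List.length_take_of_le <| by
      rcases h.2 s₀ (S.min'_mem hne) with ⟨hx, -⟩ | ⟨hx, -⟩ <;>
        exact (List.getElem?_eq_some_iff.mp hx).1.le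
    refine ⟨Fin.cons (w.take s₀) v, Fin.cons b ν, ?_, ?_⟩
    · rw [blockWord_succ, Fin.cons_zero, Fin.cons_zero, Fin.tail_cons, Fin.tail_cons, ← hv]
      exact hw
    · rw [image_blockStart_succ]
      simp only [Fin.cons_zero, Fin.tail_cons, himage, hlen, image_add_image_sub hge]
      exact Finset.insert_erase (S.min'_mem hne)

section pairing

variable {n t : ℕ} {f : Fin t → Fin n × Fin n}

lemma sum_eq_sum_pairs {M : Type*} [AddCommMonoid M]
    (hf : Function.Bijective fun p : Fin t × Bool => if p.2 then (f p.1).1 else (f p.1).2)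
    (F : Fin n → M) : ∑ i, F i = ∑ k, (F (f k).1 + F (f k).2) := by
  rw [← hf.sum_comp, Fintype.sum_prod_type]
  simp

lemma exists_pairing (μ : Fin n → Bool) (hT : (Finset.univ.filter fun i => μ i = true).card = t)
    (hF : (Finset.univ.filter fun i => μ i = false).card = t) :
    ∃ f : Fin t → Fin n × Fin n, (∀ k, (f k).1 < (f k).2 ∧ μ (f k).1 = !μ (f k).2) ∧
      Function.Bijective fun p : Fin t × Bool => if p.2 then (f p.1).1 else (f p.1).2 := by
  obtain ⟨a⟩ : Nonempty (Fin t ≃ {i // μ i = true}) :=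
    ⟨(Fintype.equivFinOfCardEq (by rwa [Fintype.card_subtype])).symm⟩
  obtain ⟨b⟩ : Nonempty (Fin t ≃ {i // μ i = false}) :=
    ⟨(Fintype.equivFinOfCardEq (by rwa [Fintype.card_subtype])).symm⟩
  have hab : ∀ k, (a k : Fin n) ≠ b k := fun k h => by simpa [h, (b k).2] using (a k).2
  refine ⟨fun k => (min (a k) (b k), max (a k) (b k)),
    fun k => ⟨min_lt_max.mpr (hab k), ?_⟩, ?_⟩
  · rcases le_total (a k : Fin n) (b k) with h | h
    · simp [min_eq_left h, max_eq_right h, (a k).2, (b k).2]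
    · simp [min_eq_right h, max_eq_left h, (a k).2, (b k).2]
  have hn : n = t * 2 := by
    have := Finset.card_filter_add_card_filter_not (s := Finset.univ) fun i => μ i = true
    simp_all
    omega
  rw [Fintype.bijective_iff_surjective_and_card]
  refine ⟨fun i => ?_, by simp [hn]⟩
  cases h : μ i
  · obtain ⟨k, hk⟩ := b.surjective ⟨i, h⟩
    refine ⟨(k, decide (i ≤ a k)), ?_⟩
    by_cases hle : i ≤ a k
    · simp [hle, hk]
    · simp [hle, hk, max_def]
      exact fun h' => absurd h'.le hle
  · obtain ⟨k, hk⟩ := a.surjective ⟨i, h⟩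
    refine ⟨(k, decide (i ≤ b k)), ?_⟩
    by_cases hle : i ≤ b k <;> simp [hle, hk, max_def]

end pairing

section strong

variable {t : ℕ} {us : Fin (2 * t + 1) → List (Fin 3)} {μ : Fin (2 * t) → Bool}

lemma pCtr_eq_pAt (i : Fin (2 * t)) :
    pCtr t μ i = pAt (swapWord t us μ) (blockStart (2 * t) us i) :=
  (pAt_blockStart i).symm

lemma qCtr_eq_qAt (i : Fin (2 * t)) :
    qCtr t us μ i = qAt (swapWord t us μ) (blockStart (2 * t) us i) := by
  rw [swapWord_eq_blockWord, qAt_blockStart, qCtr, rightC]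
  cases μ i <;> simp

lemma isBalanced_image_blockStart_iff (I : Finset (Fin (2 * t))) :
    IsBalanced (swapWord t us μ) (I.image (blockStart (2 * t) us)) ↔
      ∑ i ∈ I, pCtr t μ i = 0 ∧ ∑ i ∈ I, qCtr t us μ i = 0 := by
  simp only [IsBalanced, Finset.sum_image blockStart_injective.injOn, pCtr_eq_pAt (us := us),
    qCtr_eq_qAt]

lemma sum_pCtr : ∑ i, pCtr t μ i =
    ((Finset.univ.filter fun i => μ i = false).card : ℤ) -
      (Finset.univ.filter fun i => μ i = true).card := by
  simp [pCtr, Finset.sum_ite]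
  ring

lemma sum_qCtr_of_pairing {f : Fin t → Fin (2 * t) × Fin (2 * t)}
    (hf : ∀ k, (f k).1 < (f k).2 ∧ μ (f k).1 = !μ (f k).2)
    (hbij : Function.Bijective fun p : Fin t × Bool => if p.2 then (f p.1).1 else (f p.1).2) :
    ∑ i, qCtr t us μ i =
      (∑ k, if μ (f k).1 then 0 else innerC t us (f k).1 (f k).2) -
        ∑ k, if μ (f k).1 then innerC t us (f k).1 (f k).2 else 0 := by
  rw [sum_eq_sum_pairs hbij, ← Finset.sum_sub_distrib]
  refine Finset.sum_congr rfl fun k _ => ?_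
  have := (hf k).2
  cases h : μ (f k).2 <;> simp_all [qCtr, innerC] <;> ring

lemma isStrong2t_iff_sum :
    IsStrong2t t us μ ↔ ∑ i, pCtr t μ i = 0 ∧ ∑ i, qCtr t us μ i = 0 := by
  constructor
  · rintro ⟨f, hf, hbij, hbal⟩
    refine ⟨?_, by rw [sum_qCtr_of_pairing hf hbij, hbal, sub_self]⟩
    rw [sum_eq_sum_pairs hbij]
    refine Finset.sum_eq_zero fun k _ => ?_
    have := (hf k).2
    cases h : μ (f k).2 <;> simp_all [pCtr]
  · rintro ⟨hp, hq⟩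
    have hcard := Finset.card_filter_add_card_filter_not (s := Finset.univ) fun i => μ i = true
    rw [sum_pCtr] at hp
    simp only [Bool.not_eq_true, Finset.card_univ, Fintype.card_fin] at hcard
    obtain ⟨f, hf, hbij⟩ := exists_pairing μ (t := t) (by omega) (by omega)
    exact ⟨f, hf, hbij, by linarith [sum_qCtr_of_pairing (us := us) hf hbij]⟩

end strong

lemma strongTrans_iff {t : ℕ} {w w' : List (Fin 3)} :
    StrongTrans t w w' ↔ ∃ S : Finset ℕ,
      IsBlockSet w S ∧ S.card = 2 * t ∧ IsBalanced w S ∧ w' = flipAt (dominoes S) w := by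
  constructor
  · rintro ⟨us, μ, hs, rfl, rfl⟩
    refine ⟨_, isBlockSet_image_blockStart, ?_, ?_, blockWord_not⟩
    · exact card_image_blockStart
    · simpa using (isBalanced_image_blockStart_iff Finset.univ).mpr (isStrong2t_iff_sum.mp hs)
  · rintro ⟨S, hS, hcard, hbal, rfl⟩
    obtain ⟨us, μ, rfl, rfl⟩ := hS.exists_blockWord hcard
    refine ⟨us, μ, isStrong2t_iff_sum.mpr ?_, rfl, blockWord_not.symm⟩
    simpa using (isBalanced_image_blockStart_iff Finset.univ).mp hbal

section reducible

variable {w w'' : List (Fin 3)} {S S₁ : Finset ℕ}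

lemma IsBalanced.flipAt_sdiff (h : IsBalanced w S) (h₁ : IsBalanced w S₁) (hS : Separated S)
    (hS₁ : S₁ ⊆ S) : IsBalanced (flipAt (dominoes S₁) w) (S \ S₁) := by
  have hnot s (hs : s ∈ S \ S₁) := (hS.notMem_dominoes_of_mem_sdiff hS₁ hs).1
  rw [IsBalanced, Finset.sum_congr rfl fun s hs => pAt_flipAt (hnot s hs),
    Finset.sum_congr rfl fun s hs => qAt_flipAt (hnot s hs)]
  have hp := Finset.sum_sdiff (f := pAt w) hS₁
  have hq := Finset.sum_sdiff (f := qAt w) hS₁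
  exact ⟨by linarith [h.1, h₁.1], by linarith [h.2, h₁.2]⟩

lemma IsBlockSet.exists_subset_of_strongTrans {t₁ t₂ : ℕ} (hS : IsBlockSet w S)
    (hcard : S.card = 2 * (t₁ + t₂)) (h₁ : StrongTrans t₁ w w'')
    (h₂ : StrongTrans t₂ w'' (flipAt (dominoes S) w)) :
    ∃ S₁ ⊆ S, S₁.card = 2 * t₁ ∧ IsBalanced w S₁ := by
  obtain ⟨S₁, hS₁, hc₁, hb₁, rfl⟩ := strongTrans_iff.mp h₁
  obtain ⟨S₂, hS₂, hc₂, -, hw⟩ := strongTrans_iff.mp h₂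
  rw [flipAt_flipAt, ← Finset.coe_symmDiff] at hw
  have hsub : ↑(symmDiff (dominoes S₁) (dominoes S₂)) ⊆ abPositions w := by
    rw [Finset.coe_symmDiff]
    refine symmDiff_le_sup.trans (Set.union_subset hS₁.dominoes_subset ?_)
    simpa using hS₂.dominoes_subset
  have hD := eq_of_flipAt_eq hS.dominoes_subset hsub hw
  rw [Finset.coe_inj] at hD
  have := eq_union_of_dominoes_eq_symmDiff hS.1 hS₁.1 hS₂.1 (by omega) hD
  exact ⟨S₁, this ▸ Finset.subset_union_left, hc₁, hb₁⟩

lemma IsBlockSet.exists_strongTrans_strongTrans_iff {t : ℕ} (hS : IsBlockSet w S)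
    (hbal : IsBalanced w S) (hcard : S.card = 2 * t) :
    (∃ (w'' : List (Fin 3)) (t₁ t₂ : ℕ), 0 < t₁ ∧ 0 < t₂ ∧ t₁ + t₂ = t ∧
        StrongTrans t₁ w w'' ∧ StrongTrans t₂ w'' (flipAt (dominoes S) w)) ↔
      ∃ S₁ ⊆ S, S₁.Nonempty ∧ S₁ ≠ S ∧ IsBalanced w S₁ := by
  constructor
  · rintro ⟨w'', t₁, t₂, ht₁, ht₂, rfl, h₁, h₂⟩
    obtain ⟨S₁, hS₁, hc₁, hb₁⟩ := hS.exists_subset_of_strongTrans hcard h₁ h₂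
    exact ⟨S₁, hS₁, Finset.card_pos.mp (by omega), fun h => by subst h; omega, hb₁⟩
  · rintro ⟨S₁, hS₁, hne, hneq, hb₁⟩
    obtain ⟨t₁, ht₁⟩ := hb₁.even_card
    have hc₂ := Finset.card_sdiff_add_card_eq_card hS₁
    have hlt := Finset.card_lt_card (hS₁.ssubset_of_ne hneq)
    have := hne.card_pos
    refine ⟨_, t₁, t - t₁, by omega, by omega, by omega,
      strongTrans_iff.mpr ⟨S₁, hS.mono hS₁, by omega, hb₁, rfl⟩, ?_⟩
    refine strongTrans_iff.mpr ⟨S \ S₁, hS.flipAt_sdiff hS₁, by omega,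
      hbal.flipAt_sdiff hb₁ hS.1 hS₁, ?_⟩
    rw [flipAt_flipAt, ← Finset.coe_symmDiff, symmDiff_dominoes_sdiff hS.1 hS₁]

end reducible

end Strong2t

theorem strong2t_reducible_iff_subset_general (t : ℕ)
    (us : Fin (2 * t + 1) → List (Fin 3)) (μ : Fin (2 * t) → Bool)
    (h : IsStrong2t t us μ) :
    (∃ (w'' : List (Fin 3)) (t₁ t₂ : ℕ), 0 < t₁ ∧ 0 < t₂ ∧ t₁ + t₂ = t ∧
        StrongTrans t₁ (swapWord t us μ) w'' ∧
        StrongTrans t₂ w'' (swapWord t us (fun i => !(μ i)))) ↔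
      (∃ I : Finset (Fin (2 * t)), I.Nonempty ∧ I ≠ Finset.univ ∧
        ∑ i ∈ I, pCtr t μ i = 0 ∧ ∑ i ∈ I, qCtr t us μ i = 0) := by
  have hS : Strong2t.IsBlockSet (swapWord t us μ)
      (Finset.univ.image (Strong2t.blockStart (2 * t) us)) :=
    Strong2t.isBlockSet_image_blockStart
  have hbal := (Strong2t.isBalanced_image_blockStart_iff Finset.univ).mpr
    (Strong2t.isStrong2t_iff_sum.mp h)
  rw [Strong2t.swapWord_eq_blockWord t us (fun i => !μ i), Strong2t.blockWord_not,
    ← Strong2t.swapWord_eq_blockWord,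
    hS.exists_strongTrans_strongTrans_iff hbal Strong2t.card_image_blockStart]
  constructor
  · rintro ⟨S₁, hS₁, hne, hneq, hb₁⟩
    obtain ⟨I, -, rfl⟩ := Finset.subset_image_iff.mp hS₁
    exact ⟨I, Finset.image_nonempty.mp hne, fun hI => hneq (hI ▸ rfl),
      (Strong2t.isBalanced_image_blockStart_iff I).mp hb₁⟩
  · rintro ⟨I, hne, hneq, hsum⟩
    exact ⟨I.image _, Finset.image_subset_image I.subset_univ, hne.image _,
      (Finset.image_injective Strong2t.blockStart_injective).ne hneq,
      (Strong2t.isBalanced_image_blockStart_iff I).mpr hsum⟩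

theorem strong2t_reducible_iff_subset (t : ℕ) (ht : 1 ≤ t)
    (us : Fin (2 * t + 1) → List (Fin 3)) (μ : Fin (2 * t) → Bool)
    (h : IsStrong2t t us μ) :
    (∃ (w'' : List (Fin 3)) (t₁ t₂ : ℕ), 0 < t₁ ∧ 0 < t₂ ∧ t₁ + t₂ = t ∧
        StrongTrans t₁ (swapWord t us μ) w'' ∧
        StrongTrans t₂ w'' (swapWord t us (fun i => !(μ i)))) ↔
      (∃ I : Finset (Fin (2 * t)), I.Nonempty ∧ I ≠ Finset.univ ∧
        ∑ i ∈ I, pCtr t μ i = 0 ∧ ∑ i ∈ I, qCtr t us μ i = 0) :=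
  strong2t_reducible_iff_subset_general t us μ h
end

section
/- Let Σ = {a, b, c}. The words w = abcabcabcabcabcabc = (abc)^6 and w' = cabababcabccabccab are strongly M-equivalent, but (abc)^6 contains no factor of the form αβ·y·βα for any distinct letters α, β ∈ Σ and word y over Σ, so no αβ-transformation applies to (abc)^6. -/
/-- Efficient recursive computation of scattered-subword counts. -/
def cs : List (Fin 3) → List (Fin 3) → ℕ
  | [], [] => 1
  | _ :: _, [] => 0
  | v, a :: w =>
      cs v w + (match v with
        | [] => 0
        | b :: v' => if b = a then cs v' w else 0)

lemma lcount_nil_r (v : List (Fin 3)) : lcount v [] = if v = [] then 1 else 0 := by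
  unfold lcount
  cases v <;> simp [List.count]

lemma lcount_cons (a : Fin 3) (v w : List (Fin 3)) :
    lcount v (a :: w) = lcount v w +
      (match v with | [] => 0 | b :: v' => if b = a then lcount v' w else 0) := by
  unfold lcount
  show List.countP (· == v) (a :: w).sublists = _
  rw [(List.sublists_cons_perm_append a w).countP_eq, List.countP_append, List.countP_map]
  congr 1
  cases v with
  | nil =>
      simp only []
      rw [List.countP_eq_zero]
      intro x _
      simp
  | cons b v' =>
      by_cases hba : b = a
      · subst hba
        simp only [if_pos rfl]
        show List.countP _ _ = List.countP (· == v') w.sublists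
        apply List.countP_congr
        intro x _
        simp
      · simp only [if_neg hba]
        rw [List.countP_eq_zero]
        intro x _
        simp [Ne.symm hba]

lemma lcount_eq_cs (v w : List (Fin 3)) : lcount v w = cs v w := by
  induction w generalizing v with
  | nil =>
      rw [lcount_nil_r]
      cases v <;> simp [cs]
  | cons a w ih =>
      rw [lcount_cons]
      cases v with
      | nil => simp [cs, ih]
      | cons b v' =>
          show lcount (b :: v') w + (if b = a then lcount v' w else 0) = cs (b :: v') (a :: w)
          rw [ih, ih]
          rfl

theorem abc_six_strongME_and_no_transformation :
    StrongME (lpow [A, B, C] 6)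
      [C, A, B, A, B, A, B, C, A, B, C, C, A, B, C, C, A, B] ∧
    ∀ α β : Fin 3, α ≠ β → ∀ u y v : List (Fin 3),
      lpow [A, B, C] 6 ≠ u ++ [α, β] ++ y ++ [β, α] ++ v := by
  constructor
  · unfold StrongME Mequiv
    simp only [lcount_eq_cs]
    decide
  · intro α β hne u y v h
    have hch : (lpow [A, B, C] 6).Chain' (fun x y => y = x + 1) := by
      have he : lpow [A, B, C] 6 = [A,B,C,A,B,C,A,B,C,A,B,C,A,B,C,A,B,C] := rfl
      rw [he]
      unfold A B C
      repeat' constructor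
    rw [h] at hch
    have h1 : ([α, β] : List (Fin 3)) <:+: (u ++ [α, β] ++ y ++ [β, α] ++ v) :=
      ⟨u, y ++ [β, α] ++ v, by simp⟩
    have h2 : ([β, α] : List (Fin 3)) <:+: (u ++ [α, β] ++ y ++ [β, α] ++ v) :=
      ⟨u ++ [α, β] ++ y, v, by simp⟩
    have e1 : β = α + 1 := ((List.isChain_cons_cons).mp (hch.infix h1)).1
    have e2 : α = β + 1 := ((List.isChain_cons_cons).mp (hch.infix h2)).1
    rw [e1] at e2
    exact (by decide : ∀ x : Fin 3, x ≠ x + 1 + 1) α e2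
end
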